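/- In an acyclic b-matching preference instance there is no infinite sequence of active initiatives: every sequence of configurations C_0, C_1, …, in which each C_{i+1} is obtained from C_i by an active initiative, has length strictly less than the (finite) total number of configurations of the instance. -/

import Mathlib

/-!
A formalization of b-matching preference instances (peers, acceptance graph,
quotas, preference lists given by ranks), configurations, blocking pairs,
stability, active initiatives, loving pairs, and acyclicity.
-/

open Finset

/-- A b-matching preference instance on a finite set `P` of peers:
an acceptance graph `G`, quotas `b`, and for each peer `p` a rank function
(`rank p q` is the position of `q` in `p`'s preference list, smaller is better),
injective on the neighbors of `p` (strict preferences). -/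
structure PrefInstance (P : Type*) [Fintype P] [DecidableEq P] where
  G : SimpleGraph P
  b : P → ℕ
  rank : P → P → ℕ
  rank_injOn : ∀ p : P, Set.InjOn (rank p) {q | G.Adj p q}

namespace PrefInstance

variable {P : Type*} [Fintype P] [DecidableEq P] (I : PrefInstance P)

/-- `p` prefers `q` to `r` (both neighbors of `p`, `q` ranked better). -/
def Prefers (p q r : P) : Prop :=
  I.G.Adj p q ∧ I.G.Adj p r ∧ I.rank p q < I.rank p r

/-- The instance is acyclic: there is no preference cycle, i.e. no `k ≥ 3`
distinct peers `p_1, …, p_k` (indices modulo `k`) such that each `p_i`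
prefers `p_{i+1}` to `p_{i-1}`. -/
def Acyclic : Prop :=
  ¬ ∃ (k : ℕ) (f : ZMod k → P), 3 ≤ k ∧ Function.Injective f ∧
      ∀ i : ZMod k, I.Prefers (f i) (f (i + 1)) (f (i - 1))

/-- The mates of `p` in a set `C` of edges. -/
def mates (C : Finset (Sym2 P)) (p : P) : Finset P :=
  Finset.univ.filter fun q => s(p, q) ∈ C

/-- `C` is a configuration: a set of edges of the acceptance graph in which every
peer `p` has at most `b p` mates. -/
def IsConfig (C : Finset (Sym2 P)) : Prop :=
  (∀ e ∈ C, e ∈ I.G.edgeSet) ∧ ∀ p : P, (mates C p).card ≤ I.b p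

/-- `p` is under-mated in `C`: it has fewer than `b p` mates. -/
def UnderMated (C : Finset (Sym2 P)) (p : P) : Prop :=
  (mates C p).card < I.b p

/-- `p` is willing to pair with `q`: it is under-mated, or it prefers `q`
to its worst mate in `C`. -/
def Willing (C : Finset (Sym2 P)) (p q : P) : Prop :=
  I.UnderMated C p ∨ ∃ w ∈ mates C p, I.rank p q < I.rank p w

/-- `{p, q}` is a blocking pair for `C`: an edge of the acceptance graph not in
`C` such that each endpoint is under-mated or prefers the other to its worst mate. -/
def BlockingPair (C : Finset (Sym2 P)) (p q : P) : Prop :=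
  I.G.Adj p q ∧ s(p, q) ∉ C ∧ I.Willing C p q ∧ I.Willing C q p

/-- A configuration is stable if it admits no blocking pair. -/
def IsStable (C : Finset (Sym2 P)) : Prop :=
  I.IsConfig C ∧ ∀ p q : P, ¬ I.BlockingPair C p q

/-- The edges to be dropped at `p` when `p` gets a new mate: none if `p` is
under-mated, otherwise the edge joining `p` to its worst mate in `C`. -/
def dropEdges (C : Finset (Sym2 P)) (p : P) : Finset (Sym2 P) :=
  if (mates C p).card < I.b p then ∅
  else ((mates C p).filter fun w => ∀ r ∈ mates C p, I.rank p r ≤ I.rank p w).image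
      fun w => s(p, w)

/-- The configuration produced by resolving the blocking pair `{p, q}` of `C`:
add the edge `{p, q}` and, for each of `p` and `q` already at full quota,
remove the edge joining it to its worst mate. -/
def resolve (C : Finset (Sym2 P)) (p q : P) : Finset (Sym2 P) :=
  insert s(p, q) (C \ (I.dropEdges C p ∪ I.dropEdges C q))

/-- `C'` is obtained from `C` by an active initiative. -/
def ActiveStep (C C' : Finset (Sym2 P)) : Prop :=
  ∃ p q : P, I.BlockingPair C p q ∧ C' = I.resolve C p q

/-- `{p, q}` is a loving pair: an edge of the acceptance graph whose endpoints
rank each other first. -/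
def LovingPair (p q : P) : Prop :=
  I.G.Adj p q ∧ (∀ r : P, I.G.Adj p r → I.rank p q ≤ I.rank p r) ∧
    ∀ r : P, I.G.Adj q r → I.rank q p ≤ I.rank q r

open scoped Classical in
/-- The best-mate initiative of peer `p` at configuration `C`: resolve the
blocking pair `{p, q}` where `q` is the peer `p` prefers most among all peers
forming a blocking pair with `p`; if `p` belongs to no blocking pair, `C` is
left unchanged. -/
noncomputable def bestMateInit (C : Finset (Sym2 P)) (p : P) : Finset (Sym2 P) :=
  if h : ∃ q : P, I.BlockingPair C p q ∧
      ∀ r : P, I.BlockingPair C p r → I.rank p q ≤ I.rank p r then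
    I.resolve C p h.choose
  else C

end PrefInstance

variable {P : Type*} [Fintype P] [DecidableEq P]

open PrefInstance

/-!
An acyclic instance with an edge has a loving pair: iterating "go to your favourite neighbour"
from any edge ends in a cycle, which has length two because a longer one would be a preference
cycle. Deleting that edge keeps the instance acyclic, so peeling off loving pairs one at a time
ranks all edges globally, every peer preferring edges of smaller rank. An active initiative adds
one edge and drops at most two edges of larger rank, so the potential `∑ 3 ^ (W - rank e)`
strictly increases along the sequence, whose configurations are therefore pairwise distinct.
-/

namespace Function

variable {α : Type*} {f : α → α} {x : α}

theorem exists_iterate_mem_periodicPts [Finite α] (f : α → α) (x : α) :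
    ∃ m, f^[m] x ∈ periodicPts f := by
  obtain ⟨i, j, hij, heq⟩ := Finite.exists_ne_map_eq_of_infinite (f^[·] x)
  wlog hlt : i < j generalizing i j
  · exact this j i hij.symm heq.symm (hij.lt_or_gt.resolve_left hlt)
  refine ⟨i, mk_mem_periodicPts (Nat.sub_pos_of_lt hlt) ?_⟩
  rw [IsPeriodicPt, IsFixedPt, ← iterate_add_apply, Nat.sub_add_cancel hlt.le]
  exact heq.symm

theorem injective_iterate_val_minimalPeriod [NeZero (minimalPeriod f x)] :
    Injective fun i : ZMod (minimalPeriod f x) => f^[i.val] x := fun i j h =>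
  ZMod.val_injective _ (iterate_injOn_Iio_minimalPeriod (ZMod.val_lt i) (ZMod.val_lt j) h)

theorem iterate_val_add_one_minimalPeriod [NeZero (minimalPeriod f x)]
    (i : ZMod (minimalPeriod f x)) : f^[(i + 1).val] x = f (f^[i.val] x) := by
  rw [← ZMod.natCast_zmod_val i, ← Nat.cast_succ, ZMod.val_natCast, ZMod.val_natCast,
    iterate_mod_minimalPeriod_eq, iterate_mod_minimalPeriod_eq, iterate_succ_apply']

end Function

theorem Finset.sum_three_pow_lt_sum_insert_sdiff {α : Type*} [DecidableEq α] {s : α → ℕ}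
    {C D : Finset α} {a : α} (ha : a ∉ C) (hDC : D ⊆ C) (hD : D.card ≤ 2)
    (hlt : ∀ d ∈ D, s d < s a) :
    ∑ x ∈ C, 3 ^ s x < ∑ x ∈ insert a (C \ D), 3 ^ s x := by
  have hDsum : 3 * ∑ d ∈ D, 3 ^ s d ≤ 2 * 3 ^ s a :=
    calc 3 * ∑ d ∈ D, 3 ^ s d = ∑ d ∈ D, 3 ^ (s d + 1) := by
          rw [Finset.mul_sum]; simp only [pow_succ, mul_comm]
      _ ≤ ∑ _d ∈ D, 3 ^ s a :=
          Finset.sum_le_sum fun d hd => Nat.pow_le_pow_right (by norm_num) (hlt d hd)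
      _ = D.card * 3 ^ s a := by rw [Finset.sum_const, smul_eq_mul]
      _ ≤ 2 * 3 ^ s a := Nat.mul_le_mul_right _ hD
  rw [Finset.sum_insert fun h => ha (Finset.mem_sdiff.mp h).1, ← Finset.sum_sdiff hDC]
  have := pow_pos (show 0 < 3 by norm_num) (s a)
  omega

theorem lt_card_of_chain {α β : Type*} [Finite α] [Preorder β] {Q : α → Prop}
    {R : α → α → Prop} (φ : α → β) (hR : ∀ x y, Q x → R x y → Q y ∧ φ x < φ y)
    {k : ℕ} {f : ℕ → α} (h0 : Q (f 0)) (hf : ∀ i < k, R (f i) (f (i + 1))) :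
    k < Nat.card {x // Q x} := by
  have hQ : ∀ i ≤ k, Q (f i) := by
    intro i hi
    induction i with
    | zero => exact h0
    | succ i ih => exact (hR _ _ (ih (by omega)) (hf i hi)).1
  have hmono : StrictMonoOn (φ ∘ f) (Set.Iic k) :=
    strictMonoOn_Iic_of_lt_succ fun i hi => (hR _ _ (hQ i hi.le) (hf i hi)).2
  have hinj : Function.Injective
      fun i : Fin (k + 1) => (⟨f i, hQ i (Fin.is_le i)⟩ : {x // Q x}) :=
    fun i j h => Fin.ext <| hmono.injOn (Fin.is_le i) (Fin.is_le j)
      (congrArg (φ ∘ Subtype.val) h)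
  simpa using Nat.card_le_card_of_injective _ hinj

namespace PrefInstance

variable (I : PrefInstance P)

open scoped Classical in
noncomputable def favorite (p : P) : P :=
  if h : ∃ q, I.G.Adj p q then Function.argminOn (I.rank p) {q | I.G.Adj p q} h else p

variable {I}

theorem adj_favorite {p q : P} (h : I.G.Adj p q) : I.G.Adj p (I.favorite p) := by
  rw [favorite, dif_pos ⟨q, h⟩]
  exact Function.argminOn_mem _ _ _

theorem rank_favorite_le {p r : P} (h : I.G.Adj p r) : I.rank p (I.favorite p) ≤ I.rank p r := by
  rw [favorite, dif_pos ⟨r, h⟩]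
  exact Function.argminOn_le _ _ h

theorem prefers_favorite {p r : P} (h : I.G.Adj p r) (hr : r ≠ I.favorite p) :
    I.Prefers p (I.favorite p) r :=
  ⟨adj_favorite h, h, (rank_favorite_le h).lt_of_ne fun heq =>
    hr (I.rank_injOn p h (adj_favorite h) heq.symm)⟩

theorem adj_favorite_iterate {p q : P} (h : I.G.Adj p q) (m : ℕ) :
    I.G.Adj (I.favorite^[m] p) (I.favorite^[m + 1] p) := by
  induction m with
  | zero => exact adj_favorite h
  | succ m ih =>
    rw [Function.iterate_succ_apply' _ (m + 1)]
    exact adj_favorite ih.symm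

theorem Acyclic.minimalPeriod_favorite_lt_three (hI : I.Acyclic) {y : P}
    (hadj : I.G.Adj y (I.favorite y)) :
    Function.minimalPeriod I.favorite y < 3 := by
  set n := Function.minimalPeriod I.favorite y
  by_contra! hn
  have : NeZero n := ⟨by omega⟩
  set c : ZMod n → P := fun i => I.favorite^[i.val] y
  have hsucc (i : ZMod n) : c (i + 1) = I.favorite (c i) :=
    Function.iterate_val_add_one_minimalPeriod i
  have hstep (i : ZMod n) : I.G.Adj (c i) (c (i + 1)) := by
    rw [hsucc, ← Function.iterate_succ_apply' I.favorite]
    exact adj_favorite_iterate hadj i.val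
  have htwo : (2 : ZMod n) ≠ 0 := by
    have := (ZMod.natCast_eq_zero_iff 2 n).not.mpr (Nat.not_dvd_of_pos_of_lt two_pos hn)
    exact_mod_cast this
  refine hI ⟨n, c, hn, Function.injective_iterate_val_minimalPeriod, fun i => ?_⟩
  have hprev : I.G.Adj (c i) (c (i - 1)) := by simpa using (hstep (i - 1)).symm
  rw [hsucc]
  refine prefers_favorite hprev fun h => htwo ?_
  have := Function.injective_iterate_val_minimalPeriod (hsucc i ▸ h : c (i - 1) = c (i + 1))
  linear_combination -this

theorem Acyclic.exists_lovingPair (hI : I.Acyclic) {a b : P} (hab : I.G.Adj a b) :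
    ∃ p q, I.LovingPair p q := by
  obtain ⟨m, hm⟩ := Function.exists_iterate_mem_periodicPts I.favorite a
  set y := I.favorite^[m] a
  have hy : I.G.Adj y (I.favorite y) := by
    simpa only [Function.iterate_succ_apply'] using adj_favorite_iterate hab m
  have hlt := hI.minimalPeriod_favorite_lt_three hy
  have hpos := Function.minimalPeriod_pos_of_mem_periodicPts hm
  have hper := Function.iterate_minimalPeriod (f := I.favorite) (x := y)
  interval_cases Function.minimalPeriod I.favorite y
  · exact absurd (hper : I.favorite y = y).symm hy.ne
  · refine ⟨y, I.favorite y, hy, fun r hr => rank_favorite_le hr, fun r hr => ?_⟩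
    have h := rank_favorite_le hr
    rwa [show I.favorite (I.favorite y) = y from hper] at h

theorem LovingPair.not_prefers {p q x y z : P} (hpq : I.LovingPair p q)
    (hxz : s(x, z) = s(p, q)) : ¬ I.Prefers x y z := by
  rintro ⟨hxy, -, hlt⟩
  rcases Sym2.eq_iff.mp hxz with ⟨rfl, rfl⟩ | ⟨rfl, rfl⟩
  · exact (hpq.2.1 y hxy).not_gt hlt
  · exact (hpq.2.2 y hxy).not_gt hlt

variable (I) in
def deleteEdge (e : Sym2 P) : PrefInstance P :=
  { I with
    G := I.G.deleteEdges {e}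
    rank_injOn := fun p => (I.rank_injOn p).mono fun _ hq => (SimpleGraph.deleteEdges_adj.mp hq).1 }

theorem prefers_deleteEdge {e : Sym2 P} {p q r : P} :
    (I.deleteEdge e).Prefers p q r ↔ I.Prefers p q r ∧ s(p, q) ≠ e ∧ s(p, r) ≠ e := by
  simp only [Prefers, deleteEdge, SimpleGraph.deleteEdges_adj, Set.mem_singleton_iff]
  tauto

theorem Acyclic.deleteEdge (hI : I.Acyclic) (e : Sym2 P) : (I.deleteEdge e).Acyclic :=
  fun ⟨k, f, hk, hinj, hpref⟩ =>
    hI ⟨k, f, hk, hinj, fun i => (prefers_deleteEdge.mp (hpref i)).1⟩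

variable (I) in
def IsGlobalRanking (w : Sym2 P → ℕ) : Prop :=
  ∀ p q r, I.Prefers p q r → w s(p, q) < w s(p, r)

theorem LovingPair.isGlobalRanking {p q : P} (hpq : I.LovingPair p q) {w : Sym2 P → ℕ}
    (hw : (I.deleteEdge s(p, q)).IsGlobalRanking w) :
    I.IsGlobalRanking fun e => if e = s(p, q) then 0 else w e + 1 := by
  intro x y z hxyz
  have hxz : s(x, z) ≠ s(p, q) := fun h => hpq.not_prefers h hxyz
  by_cases hxy : s(x, y) = s(p, q)
  · simp [hxy, hxz]
  · simpa [hxy, hxz] using hw x y z (prefers_deleteEdge.mpr ⟨hxyz, hxy, hxz⟩)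

theorem Acyclic.exists_isGlobalRanking (hI : I.Acyclic) : ∃ w, I.IsGlobalRanking w := by
  induction h : I.G.edgeSet.ncard using Nat.strong_induction_on generalizing I with
  | _ n ih =>
    by_cases hedge : ∃ a b, I.G.Adj a b
    · obtain ⟨a, b, hab⟩ := hedge
      obtain ⟨p, q, hpq⟩ := hI.exists_lovingPair hab
      have hlt : (I.deleteEdge s(p, q)).G.edgeSet.ncard < n := by
        rw [← h, PrefInstance.deleteEdge, SimpleGraph.edgeSet_deleteEdges]
        exact Set.ncard_sdiff_singleton_lt_of_mem (I.G.mem_edgeSet.mpr hpq.1)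
      obtain ⟨w, hw⟩ := ih _ hlt (hI.deleteEdge s(p, q)) rfl
      exact ⟨_, hpq.isGlobalRanking hw⟩
    · exact ⟨0, fun p q _ hpqr => (hedge ⟨p, q, hpqr.1⟩).elim⟩

variable {C : Finset (Sym2 P)} {p q : P}

theorem mem_mates {a : P} : a ∈ mates C p ↔ s(p, a) ∈ C := by
  simp [mates]

theorem IsConfig.adj_of_mem_mates (hC : I.IsConfig C) {a : P} (h : a ∈ mates C p) :
    I.G.Adj p a :=
  I.G.mem_edgeSet.mp (hC.1 _ (mem_mates.mp h))

theorem mem_dropEdges {e : Sym2 P} :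
    e ∈ I.dropEdges C p ↔ ¬ I.UnderMated C p ∧
      ∃ m ∈ mates C p, (∀ r ∈ mates C p, I.rank p r ≤ I.rank p m) ∧ s(p, m) = e := by
  unfold dropEdges UnderMated
  split_ifs with h <;> simp [h, and_assoc]

theorem dropEdges_subset : I.dropEdges C p ⊆ C := by
  intro e he
  obtain ⟨-, m, hm, -, rfl⟩ := mem_dropEdges.mp he
  exact mem_mates.mp hm

theorem IsConfig.card_dropEdges_le_one (hC : I.IsConfig C) : (I.dropEdges C p).card ≤ 1 := by
  refine Finset.card_le_one.mpr fun e he e' he' => ?_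
  obtain ⟨-, m, hm, hmax, rfl⟩ := mem_dropEdges.mp he
  obtain ⟨-, m', hm', hmax', rfl⟩ := mem_dropEdges.mp he'
  rw [I.rank_injOn p (hC.adj_of_mem_mates hm) (hC.adj_of_mem_mates hm')
    ((hmax' m hm).antisymm (hmax m' hm'))]

theorem exists_mem_dropEdges (hfull : ¬ I.UnderMated C p) (hwill : I.Willing C p q) :
    ∃ m ∈ mates C p, s(p, m) ∈ I.dropEdges C p := by
  obtain ⟨w, hw, -⟩ := hwill.resolve_left hfull
  obtain ⟨m, hm, hmax⟩ := (mates C p).exists_max_image (I.rank p) ⟨w, hw⟩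
  exact ⟨m, hm, mem_dropEdges.mpr ⟨hfull, m, hm, hmax, rfl⟩⟩

theorem IsGlobalRanking.lt_of_mem_dropEdges {w : Sym2 P → ℕ} (hw : I.IsGlobalRanking w)
    (hC : I.IsConfig C) (hpq : I.BlockingPair C p q) {e : Sym2 P} (he : e ∈ I.dropEdges C p) :
    w s(p, q) < w e := by
  obtain ⟨hfull, m, hm, hmax, rfl⟩ := mem_dropEdges.mp he
  obtain ⟨r, hr, hlt⟩ := hpq.2.2.1.resolve_left hfull
  exact hw p q m ⟨hpq.1, hC.adj_of_mem_mates hm, hlt.trans_le (hmax r hr)⟩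

theorem BlockingPair.symm (h : I.BlockingPair C p q) : I.BlockingPair C q p :=
  ⟨h.1.symm, Sym2.eq_swap ▸ h.2.1, h.2.2.2, h.2.2.1⟩

theorem resolve_comm : I.resolve C p q = I.resolve C q p := by
  rw [resolve, resolve, Sym2.eq_swap, Finset.union_comm]

theorem mates_resolve_subset (hpq : p ≠ q) :
    mates (I.resolve C p q) p ⊆
      insert q ((mates C p).filter fun m => s(p, m) ∉ I.dropEdges C p) := by
  intro a ha
  simp only [mem_mates, resolve, Finset.mem_insert, Finset.mem_sdiff, Finset.mem_union] at ha
  simp only [Finset.mem_insert, Finset.mem_filter, mem_mates]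
  rcases ha with h | ⟨h, hdrop⟩
  · rcases Sym2.eq_iff.mp h with ⟨-, rfl⟩ | ⟨rfl, -⟩
    · exact .inl rfl
    · exact (hpq rfl).elim
  · exact .inr ⟨h, fun h' => hdrop (.inl h')⟩

theorem mates_resolve_subset_of_ne {x : P} (hxp : x ≠ p) (hxq : x ≠ q) :
    mates (I.resolve C p q) x ⊆ mates C x := by
  intro a ha
  simp only [mem_mates, resolve, Finset.mem_insert, Finset.mem_sdiff] at ha ⊢
  rcases ha with h | ⟨h, -⟩
  · rcases Sym2.eq_iff.mp h with ⟨rfl, -⟩ | ⟨rfl, -⟩ <;> contradiction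
  · exact h

theorem IsConfig.card_mates_resolve_le (hC : I.IsConfig C) (hpq : I.BlockingPair C p q) :
    (mates (I.resolve C p q) p).card ≤ I.b p := by
  set kept := (mates C p).filter fun m => s(p, m) ∉ I.dropEdges C p
  have hle : (mates (I.resolve C p q) p).card ≤ kept.card + 1 :=
    (Finset.card_le_card (mates_resolve_subset hpq.1.ne)).trans (Finset.card_insert_le _ _)
  by_cases hfull : I.UnderMated C p
  · have : kept.card ≤ (mates C p).card := Finset.card_filter_le _ _
    unfold UnderMated at hfull
    omega
  · obtain ⟨m, hm, hdrop⟩ := exists_mem_dropEdges hfull hpq.2.2.1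
    have : kept.card < (mates C p).card :=
      Finset.card_lt_card (Finset.filter_ssubset.mpr ⟨m, hm, not_not.mpr hdrop⟩)
    have := hC.2 p
    omega

theorem IsConfig.resolve (hC : I.IsConfig C) (hpq : I.BlockingPair C p q) :
    I.IsConfig (I.resolve C p q) := by
  refine ⟨fun e he => ?_, fun x => ?_⟩
  · rcases Finset.mem_insert.mp he with rfl | he
    · exact hpq.1
    · exact hC.1 e (Finset.mem_sdiff.mp he).1
  · by_cases hxp : x = p
    · rw [hxp]
      exact hC.card_mates_resolve_le hpq
    by_cases hxq : x = q
    · rw [hxq, resolve_comm]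
      exact hC.card_mates_resolve_le hpq.symm
    · exact (Finset.card_le_card (mates_resolve_subset_of_ne hxp hxq)).trans (hC.2 x)

theorem IsConfig.activeStep (hC : I.IsConfig C) {C' : Finset (Sym2 P)} (h : I.ActiveStep C C') :
    I.IsConfig C' := by
  obtain ⟨p, q, hpq, rfl⟩ := h
  exact hC.resolve hpq

/-- Base `3`: the edge an active step adds outweighs the at most two edges it drops, which are
ranked after it. -/
def potential (w : Sym2 P → ℕ) (C : Finset (Sym2 P)) : ℕ :=
  ∑ e ∈ C, 3 ^ (univ.sup w - w e)

theorem IsGlobalRanking.potential_lt {w : Sym2 P → ℕ} (hw : I.IsGlobalRanking w)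
    (hC : I.IsConfig C) {C' : Finset (Sym2 P)} (h : I.ActiveStep C C') :
    potential w C < potential w C' := by
  obtain ⟨p, q, hpq, rfl⟩ := h
  have hlt {e : Sym2 P} (he : e ∈ I.dropEdges C p ∪ I.dropEdges C q) : w s(p, q) < w e := by
    rcases Finset.mem_union.mp he with he | he
    · exact hw.lt_of_mem_dropEdges hC hpq he
    · exact Sym2.eq_swap (a := p) ▸ hw.lt_of_mem_dropEdges hC hpq.symm he
  refine Finset.sum_three_pow_lt_sum_insert_sdiff hpq.2.1
    (Finset.union_subset dropEdges_subset dropEdges_subset) ?_ fun e he => ?_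
  · have := Finset.card_union_le (I.dropEdges C p) (I.dropEdges C q)
    have := hC.card_dropEdges_le_one (p := p)
    have := hC.card_dropEdges_le_one (p := q)
    omega
  · have := Finset.le_sup (f := w) (Finset.mem_univ e)
    have := hlt he
    omega

end PrefInstance

/-- In an acyclic instance there is no infinite sequence of
active initiatives: every such sequence has length strictly less than the
(finite) total number of configurations. -/
theorem acyclic_activeSteps_length_lt (I : PrefInstance P) (hI : I.Acyclic)
    (k : ℕ) (f : ℕ → Finset (Sym2 P)) (hC : I.IsConfig (f 0))
    (hstep : ∀ i < k, I.ActiveStep (f i) (f (i + 1))) :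
    k < Nat.card {C : Finset (Sym2 P) // I.IsConfig C} := by
  obtain ⟨w, hw⟩ := hI.exists_isGlobalRanking
  exact lt_card_of_chain (potential w)
    (fun _ _ hC' h => ⟨hC'.activeStep h, hw.potential_lt hC' h⟩) hC hstep
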